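/- Normalization asymptotics: under d_N → 0 and d_N·log N → 0, the partition function Z_N = Σ_{η∈H_N} ∏_{x∈S} w_N(η_x)m_⋆(x)^{η_x} satisfies N·Z_N/d_N → |S_⋆| as N → ∞. -/

import Mathlib

/-!
Since `Σ_x η_x = N`, we have `N·Z_N = Σ_{x₀} Σ_η η_{x₀} W(η)`. For fixed `x₀` the configuration
`η = N·δ_{x₀}` contributes `N·w_N(N)·m_⋆(x₀)^N`, and `N·w_N(N)/d_N` lies between `1` and
`exp(d_N H_N)`, `H_N` the harmonic number. Every other configuration has
`η_{x₀} w_N(η_{x₀}) ≤ d_N exp(d_N H_N) =: c` and is determined by its nonzero restriction to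
`S \ {x₀}`; these restrictions have total weight at most `(1 + c H_N)^{|S|-1} - 1 = O(d_N H_N)`.
Since `d_N H_N → 0`, the remainder is `o(d_N)`, while `Σ_x m_⋆(x)^N → |S_⋆|`.
-/

/-- The weight `w_N(n) = Γ(d_N+n)/(n!Γ(d_N))`, via the recursion
`w(0) = 1`, `w(n+1) = w(n)·(d+n)/(n+1)`. -/
noncomputable def inclW (d : ℝ) : ℕ → ℝ
  | 0 => 1
  | n + 1 => inclW d n * (d + n) / (n + 1)

open Filter Topology Finset Real

section Weight

variable {d : ℝ}

lemma succ_mul_inclW_succ (d : ℝ) (n : ℕ) :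
    (n + 1 : ℝ) * inclW d (n + 1) = (d + n) * inclW d n := by
  rw [inclW]
  field_simp

lemma inclW_nonneg (hd : 0 ≤ d) : ∀ n, 0 ≤ inclW d n
  | 0 => zero_le_one
  | n + 1 => by
    rw [inclW]
    have := inclW_nonneg hd n
    positivity

lemma le_succ_mul_inclW_succ (hd : 0 ≤ d) : ∀ n : ℕ, d ≤ (n + 1 : ℝ) * inclW d (n + 1)
  | 0 => by simp [inclW]
  | n + 1 => by
    have h := succ_mul_inclW_succ d (n + 1)
    have := inclW_nonneg hd (n + 1)
    push_cast at h ⊢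
    nlinarith [le_succ_mul_inclW_succ hd n]

lemma succ_mul_inclW_succ_le (hd : 0 ≤ d) :
    ∀ n : ℕ, (n + 1 : ℝ) * inclW d (n + 1) ≤ d * exp (d * harmonic n)
  | 0 => by simp [inclW]
  | n + 1 => by
    have ih := succ_mul_inclW_succ_le hd n
    have hstep : 1 + d / (n + 1) ≤ exp (d / (n + 1)) := by
      linarith [add_one_le_exp (d / (n + 1))]
    calc ((n + 1 : ℕ) + 1 : ℝ) * inclW d (n + 1 + 1)
        = (n + 1 : ℝ) * inclW d (n + 1) * (1 + d / (n + 1)) := by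
          have h := succ_mul_inclW_succ d (n + 1)
          push_cast at h ⊢
          rw [h]
          field_simp
          ring
      _ ≤ d * exp (d * harmonic n) * exp (d / (n + 1)) := by gcongr
      _ = d * exp (d * harmonic (n + 1)) := by
          rw [mul_assoc, ← exp_add, harmonic_succ]
          push_cast
          ring_nf

end Weight

lemma harmonic_mono : Monotone harmonic :=
  monotone_nat_of_le_succ fun n => by
    rw [harmonic_succ]
    exact le_add_of_nonneg_right (by positivity)

lemma natCast_mul_inclW_le {d : ℝ} (hd : 0 ≤ d) {n N : ℕ} (hnN : n ≤ N) :
    n * inclW d n ≤ d * exp (d * harmonic N) := by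
  cases n with
  | zero => simpa using mul_nonneg hd (exp_pos _).le
  | succ n =>
    calc ((n + 1 : ℕ) : ℝ) * inclW d (n + 1) ≤ d * exp (d * harmonic n) := by
          exact_mod_cast succ_mul_inclW_succ_le hd n
      _ ≤ d * exp (d * harmonic N) := by
          gcongr
          exact_mod_cast harmonic_mono (by omega)

lemma tendsto_mul_harmonic {d : ℕ → ℝ} (hd : ∀ N, 0 ≤ d N)
    (hdlog : Tendsto (fun N : ℕ => d N * log N) atTop (𝓝 0)) :
    Tendsto (fun N : ℕ => d N * harmonic N) atTop (𝓝 0) := by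
  have hlog : ∀ N : ℕ, 3 ≤ N → 1 ≤ log N := fun N hN => by
    rw [le_log_iff_exp_le (by positivity)]
    exact exp_one_lt_three.le.trans (by exact_mod_cast hN)
  have hH : ∀ N, (0 : ℝ) ≤ harmonic N := fun N => by
    exact_mod_cast harmonic_zero ▸ harmonic_mono (Nat.zero_le N)
  refine squeeze_zero' (.of_forall fun N => mul_nonneg (hd N) (hH N))
    ?_ (by simpa using hdlog.const_mul 2)
  filter_upwards [eventually_ge_atTop 3] with N hN
  have := hd N
  nlinarith [harmonic_le_one_add_log N, hlog N hN]

lemma sum_range_succ_le_one_add_mul_harmonic {g : ℕ → ℝ} {c : ℝ} {N : ℕ} (hg₀ : g 0 = 1)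
    (hc : ∀ n ≤ N, n * g n ≤ c) :
    ∑ n ∈ range (N + 1), g n ≤ 1 + c * harmonic N := by
  rw [sum_range_succ', hg₀, add_comm, harmonic, Rat.cast_sum, mul_sum]
  gcongr with n hn
  have := hc (n + 1) (mem_range.1 hn)
  push_cast at this ⊢
  rw [le_mul_inv_iff₀ (by positivity)]
  linarith

section Configurations

variable {S : Type*} [Fintype S] {N : ℕ} {g : S → ℕ → ℝ}

lemma prod_apply_single (hg₀ : ∀ x, g x 0 = 1) (x₀ : S) (n : ℕ) :
    ∏ x, g x (Finsupp.single x₀ n x) = g x₀ n := by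
  rw [prod_eq_single x₀ (fun x _ hx => by rw [Finsupp.single_eq_of_ne hx, hg₀]) (by simp)]
  simp

variable [DecidableEq S]

lemma prod_erase_apply_single (hg₀ : ∀ x, g x 0 = 1) (x₀ : S) (n : ℕ) :
    ∏ x ∈ univ.erase x₀, g x (Finsupp.single x₀ n x) = 1 :=
  prod_eq_one fun x hx => by rw [Finsupp.single_eq_of_ne (ne_of_mem_erase hx), hg₀]

lemma single_mem_finsuppAntidiag (x₀ : S) (N : ℕ) :
    Finsupp.single x₀ N ∈ finsuppAntidiag univ N := by
  simp [mem_finsuppAntidiag]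

lemma natCast_mul_sum_finsuppAntidiag (W : (S →₀ ℕ) → ℝ) (N : ℕ) :
    (N : ℝ) * ∑ η ∈ finsuppAntidiag univ N, W η =
      ∑ x, ∑ η ∈ finsuppAntidiag univ N, (η x : ℝ) * W η := by
  rw [mul_sum, sum_comm]
  refine sum_congr rfl fun η hη => ?_
  rw [← sum_mul, ← (mem_finsuppAntidiag.1 hη).1, Nat.cast_sum]

lemma apply_add_sum_erase_of_mem_finsuppAntidiag {η : S →₀ ℕ}
    (hη : η ∈ finsuppAntidiag univ N) (x₀ : S) :
    η x₀ + ∑ x ∈ univ.erase x₀, η x = N := by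
  rw [add_sum_erase _ _ (mem_univ x₀), ← (mem_finsuppAntidiag.1 hη).1]

lemma sum_finsuppAntidiag_prod_erase_le (hg : ∀ x n, 0 ≤ g x n) (x₀ : S) (N : ℕ) :
    ∑ η ∈ finsuppAntidiag univ N, ∏ x ∈ univ.erase x₀, g x (η x) ≤
      ∏ x ∈ univ.erase x₀, ∑ n ∈ range (N + 1), g x n := by
  let restrict : (S →₀ ℕ) → ∀ x ∈ univ.erase x₀, ℕ := fun η x _ => η x
  have hinj : Set.InjOn restrict ↑(finsuppAntidiag (univ : Finset S) N) := by
    intro η hη η' hη' h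
    have hoff : ∀ x ∈ univ.erase x₀, η x = η' x := fun x hx => congrFun₂ h x hx
    have hx₀ : η x₀ = η' x₀ := by
      have h₁ := apply_add_sum_erase_of_mem_finsuppAntidiag hη x₀
      have h₂ := apply_add_sum_erase_of_mem_finsuppAntidiag hη' x₀
      rw [sum_congr rfl hoff] at h₁
      exact Nat.add_right_cancel (h₁.trans h₂.symm)
    ext x
    obtain rfl | hx := eq_or_ne x x₀
    exacts [hx₀, hoff x (mem_erase.2 ⟨hx, mem_univ x⟩)]
  have hmaps :
      (finsuppAntidiag univ N).image restrict ⊆ (univ.erase x₀).pi fun _ => range (N + 1) := by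
    simp only [image_subset_iff, Finset.mem_pi, mem_range, Nat.lt_succ_iff]
    intro η hη x _
    rw [← (mem_finsuppAntidiag.1 hη).1]
    exact single_le_sum (fun _ _ => Nat.zero_le _) (mem_univ x)
  rw [prod_sum]
  calc ∑ η ∈ finsuppAntidiag univ N, ∏ x ∈ univ.erase x₀, g x (η x)
      = ∑ p ∈ (finsuppAntidiag univ N).image restrict,
          ∏ x ∈ (univ.erase x₀).attach, g x.1 (p x.1 x.2) := by
        rw [sum_image hinj]
        exact sum_congr rfl fun η _ => (prod_attach _ fun x => g x (η x)).symm
    _ ≤ _ := sum_le_sum_of_subset_of_nonneg hmaps fun _ _ _ => prod_nonneg fun _ _ => hg _ _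

lemma natCast_mul_le_sum_apply_mul_prod (hg₀ : ∀ x, g x 0 = 1) (hg : ∀ x n, 0 ≤ g x n)
    (x₀ : S) (N : ℕ) :
    N * g x₀ N ≤ ∑ η ∈ finsuppAntidiag univ N, (η x₀ : ℝ) * ∏ x, g x (η x) := by
  calc (N : ℝ) * g x₀ N
      = (Finsupp.single x₀ N x₀ : ℝ) * ∏ x, g x (Finsupp.single x₀ N x) := by
        rw [Finsupp.single_eq_same, prod_apply_single hg₀]
    _ ≤ _ := single_le_sum (f := fun η => (η x₀ : ℝ) * ∏ x, g x (η x))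
        (fun η _ => mul_nonneg (Nat.cast_nonneg _) (prod_nonneg fun x _ => hg x _))
        (single_mem_finsuppAntidiag x₀ N)

lemma sum_apply_mul_prod_le (hg₀ : ∀ x, g x 0 = 1) (hg : ∀ x n, 0 ≤ g x n) {x₀ : S} {c : ℝ}
    (hc : ∀ n ≤ N, n * g x₀ n ≤ c) :
    ∑ η ∈ finsuppAntidiag univ N, (η x₀ : ℝ) * ∏ x, g x (η x) ≤
      N * g x₀ N + c * (∑ η ∈ finsuppAntidiag univ N, ∏ x ∈ univ.erase x₀, g x (η x) - 1) := by
  have hs := single_mem_finsuppAntidiag x₀ N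
  rw [← add_sum_erase _ _ hs, ← add_sum_erase _ _ hs, prod_apply_single hg₀,
    prod_erase_apply_single hg₀, add_sub_cancel_left, mul_sum]
  simp only [Finsupp.single_eq_same]
  refine add_le_add_right (sum_le_sum fun η hη => ?_) _
  have hle : η x₀ ≤ N := by
    have := apply_add_sum_erase_of_mem_finsuppAntidiag (mem_of_mem_erase hη) x₀
    omega
  rw [← mul_prod_erase univ _ (mem_univ x₀), ← mul_assoc]
  exact mul_le_mul_of_nonneg_right (hc _ hle) (prod_nonneg fun _ _ => hg _ _)

end Configurations

lemma tendsto_sum_pow {S : Type*} [Fintype S] {m : S → ℝ} (hm₀ : ∀ x, 0 ≤ m x)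
    (hm₁ : ∀ x, m x ≤ 1) :
    Tendsto (fun N : ℕ => ∑ x, m x ^ N) atTop (𝓝 (#{x | m x = 1} : ℝ)) := by
  rw [card_filter, Nat.cast_sum]
  refine tendsto_finsetSum _ fun x _ => ?_
  by_cases hx : m x = 1
  · simp only [hx, ↓reduceIte, Nat.cast_one]
    exact tendsto_const_nhds.congr fun N => (one_pow N).symm
  · simpa [hx] using tendsto_pow_atTop_nhds_zero_of_lt_one (hm₀ x) (lt_of_le_of_ne (hm₁ x) hx)

lemma tendsto_natCast_mul_inclW_div {d : ℕ → ℝ} (hd : ∀ N, 0 < d N)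
    (ht : Tendsto (fun N : ℕ => d N * harmonic N) atTop (𝓝 0)) :
    Tendsto (fun N : ℕ => N * inclW (d N) N / d N) atTop (𝓝 1) := by
  have hexp : Tendsto (fun N : ℕ => exp (d N * harmonic N)) atTop (𝓝 1) := by
    simpa [Function.comp_def] using (continuous_exp.tendsto 0).comp ht
  refine tendsto_of_tendsto_of_tendsto_of_le_of_le' tendsto_const_nhds hexp ?_ ?_
  · filter_upwards [eventually_ge_atTop 1] with N hN
    obtain ⟨n, rfl⟩ := Nat.exists_eq_add_of_le' hN
    rw [one_le_div (hd _)]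
    exact_mod_cast le_succ_mul_inclW_succ (hd _).le n
  · exact .of_forall fun N => (div_le_iff₀' (hd N)).2 (natCast_mul_inclW_le (hd N).le le_rfl)

section PartitionFunction

variable {S : Type*} [Fintype S] [DecidableEq S] {m : S → ℝ} {d : ℝ}

noncomputable def partitionFunction (m : S → ℝ) (d : ℝ) (N : ℕ) : ℝ :=
  ∑ η ∈ finsuppAntidiag univ N, ∏ x, inclW d (η x) * m x ^ η x

lemma natCast_mul_inclW_div_mul_sum_pow_le (hm₀ : ∀ x, 0 ≤ m x) (hd : 0 ≤ d) (N : ℕ) :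
    N * inclW d N / d * ∑ x, m x ^ N ≤ N * partitionFunction m d N / d := by
  have hg : ∀ x n, 0 ≤ inclW d n * m x ^ n := fun x n =>
    mul_nonneg (inclW_nonneg hd n) (pow_nonneg (hm₀ x) n)
  rw [div_mul_eq_mul_div, mul_assoc, mul_sum, mul_sum, partitionFunction,
    natCast_mul_sum_finsuppAntidiag]
  gcongr with x
  simpa [mul_assoc] using natCast_mul_le_sum_apply_mul_prod (fun _ => by simp [inclW]) hg x N

lemma natCast_mul_partitionFunction_div_le (hm₀ : ∀ x, 0 ≤ m x) (hm₁ : ∀ x, m x ≤ 1)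
    (hd : 0 < d) (N : ℕ) :
    N * partitionFunction m d N / d ≤ N * inclW d N / d * ∑ x, m x ^ N +
      Fintype.card S * exp (d * harmonic N) *
        ((1 + exp (d * harmonic N) * (d * harmonic N)) ^ (Fintype.card S - 1) - 1) := by
  set c := d * exp (d * harmonic N)
  have hg₀ : ∀ x, inclW d 0 * m x ^ 0 = 1 := by simp [inclW]
  have hg : ∀ x n, 0 ≤ inclW d n * m x ^ n := fun x n =>
    mul_nonneg (inclW_nonneg hd.le n) (pow_nonneg (hm₀ x) n)
  have hc : ∀ x, ∀ n ≤ N, n * (inclW d n * m x ^ n) ≤ c := fun x n hn =>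
    calc n * (inclW d n * m x ^ n) ≤ n * inclW d n := by
          rw [← mul_assoc]
          exact mul_le_of_le_one_right (mul_nonneg n.cast_nonneg (inclW_nonneg hd.le n))
            (pow_le_one₀ (hm₀ x) (hm₁ x))
      _ ≤ c := natCast_mul_inclW_le hd.le hn
  have hrow : ∀ x₀ : S, ∏ x ∈ univ.erase x₀, ∑ n ∈ range (N + 1), inclW d n * m x ^ n ≤
      (1 + c * harmonic N) ^ (Fintype.card S - 1) := fun x₀ => by
    rw [← card_univ, ← card_erase_of_mem (mem_univ x₀), ← prod_const]
    exact prod_le_prod (fun x _ => sum_nonneg fun n _ => hg x n)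
      fun x _ => sum_range_succ_le_one_add_mul_harmonic (hg₀ x) (hc x)
  rw [div_le_iff₀ hd, partitionFunction, natCast_mul_sum_finsuppAntidiag]
  calc ∑ x₀, ∑ η ∈ finsuppAntidiag univ N, (η x₀ : ℝ) * ∏ x, inclW d (η x) * m x ^ η x
      ≤ ∑ x₀ : S, (N * (inclW d N * m x₀ ^ N) +
          c * ((1 + c * harmonic N) ^ (Fintype.card S - 1) - 1)) := by
        gcongr with x₀
        refine (sum_apply_mul_prod_le hg₀ hg (hc x₀)).trans ?_
        gcongr
        exact (sum_finsuppAntidiag_prod_erase_le hg x₀ N).trans (hrow x₀)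
    _ = _ := by
        rw [sum_add_distrib, ← mul_sum, ← mul_sum, sum_const, card_univ, nsmul_eq_mul]
        simp only [c]
        field_simp

end PartitionFunction

theorem partition_function_asymptotics_general
    {S : Type*} [Fintype S] [DecidableEq S]
    (mstar : S → ℝ) (hm0 : ∀ x, 0 < mstar x) (hm1 : ∀ x, mstar x ≤ 1)
    (Sstar : Finset S) (hSstar : ∀ x, x ∈ Sstar ↔ mstar x = 1)
    (d : ℕ → ℝ) (hd : ∀ N, 0 < d N)
    (hdlog : Filter.Tendsto (fun N => d N * Real.log N) Filter.atTop (nhds 0))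
    (Z : ℕ → ℝ)
    (hZ : ∀ N, Z N = ∑ η ∈ Finset.finsuppAntidiag (Finset.univ : Finset S) N,
        ∏ x, inclW (d N) (η x) * mstar x ^ (η x)) :
    Filter.Tendsto (fun N : ℕ => (N : ℝ) * Z N / d N) Filter.atTop
      (nhds (Sstar.card : ℝ)) := by
  obtain rfl : Z = fun N => partitionFunction mstar (d N) N := funext hZ
  obtain rfl : Sstar = ({x | mstar x = 1} : Finset S) := by ext; simp [hSstar]
  have hm₀ : ∀ x, 0 ≤ mstar x := fun x => (hm0 x).le
  have ht := tendsto_mul_harmonic (fun N => (hd N).le) hdlog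
  have hexp := (continuous_exp.tendsto 0).comp ht
  rw [Function.comp_def, exp_zero] at hexp
  have hleading := (tendsto_natCast_mul_inclW_div hd ht).mul (tendsto_sum_pow hm₀ hm1)
  rw [one_mul] at hleading
  have herror : Tendsto (fun N : ℕ => Fintype.card S * exp (d N * harmonic N) *
      ((1 + exp (d N * harmonic N) * (d N * harmonic N)) ^ (Fintype.card S - 1) - 1))
      atTop (𝓝 0) := by
    simpa using (hexp.const_mul _).mul ((((hexp.mul ht).const_add 1).pow _).sub_const 1)
  refine tendsto_of_tendsto_of_tendsto_of_le_of_le hleading (by simpa using hleading.add herror)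
    (fun N => natCast_mul_inclW_div_mul_sum_pow_le hm₀ (hd N).le N)
    (fun N => natCast_mul_partitionFunction_div_le hm₀ hm1 (hd N) N)

/-- Normalization asymptotics: under `d_N > 0` and `d_N·log N → 0`, the
partition function `Z_N = Σ_{η∈H_N} ∏_x w_N(η_x) m_⋆(x)^{η_x}` satisfies
`N·Z_N/d_N → |S_⋆|`. -/
theorem partition_function_asymptotics
    {S : Type*} [Fintype S] [DecidableEq S]
    (mstar : S → ℝ) (hm0 : ∀ x, 0 < mstar x) (hm1 : ∀ x, mstar x ≤ 1)
    (Sstar : Finset S) (hSstar : ∀ x, x ∈ Sstar ↔ mstar x = 1)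
    (hne : Sstar.Nonempty)
    (d : ℕ → ℝ) (hd : ∀ N, 0 < d N)
    (hdlog : Filter.Tendsto (fun N => d N * Real.log N) Filter.atTop (nhds 0))
    (Z : ℕ → ℝ)
    (hZ : ∀ N, Z N = ∑ η ∈ Finset.finsuppAntidiag (Finset.univ : Finset S) N,
        ∏ x, inclW (d N) (η x) * mstar x ^ (η x)) :
    Filter.Tendsto (fun N : ℕ => (N : ℝ) * Z N / d N) Filter.atTop
      (nhds (Sstar.card : ℝ)) :=
  partition_function_asymptotics_general mstar hm0 hm1 Sstar hSstar d hd hdlog Z hZ
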